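/- Let φ : X → H be weakly measurable. If F is a continuous linear functional on V_φ(X,μ) (with respect to ‖·‖_φ), then there exists a unique g in the closure of the range of T̂_φ such that F([ξ]_φ) = ∫_X ξ(x)⟨φ(x),g⟩ dμ(x) for all ξ ∈ 𝒱_φ(X,μ), and ‖F‖_{φ*} = ‖g‖, where ‖·‖_{φ*} is the dual norm. Conversely, every g ∈ H defines by this formula a bounded linear functional F on V_φ(X,μ) with ‖F‖_{φ*} ≤ ‖g‖, and if g lies in the range of T̂_φ then ‖F‖_{φ*} = ‖g‖. -/

import Mathlib

open MeasureTheory Filter Topology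
open scoped Classical ENNReal NNReal

noncomputable section

variable {H : Type*} [NormedAddCommGroup H] [InnerProductSpace ℂ H] [CompleteSpace H]
  [TopologicalSpace.SeparableSpace H]
variable {X : Type*} [TopologicalSpace X] [LocallyCompactSpace X] [MeasurableSpace X]
  [BorelSpace X]

/-- Notation for the Mathlib inner product (conjugate-linear in the first slot);
the paper's inner product `⟨f, g⟩` (linear in the first slot) is `⟪g, f⟫`. -/
local notation "⟪" x ", " y "⟫" => @inner ℂ _ _ x y

/-- `φ : X → H` is weakly measurable: `x ↦ ⟨f, φ x⟩` is measurable for every `f ∈ H`. -/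
def WeaklyMeasurable (φ : X → H) : Prop :=
  ∀ f : H, Measurable fun x => ⟪φ x, f⟫

/-- `ξ ∈ 𝒱_φ(X,μ)`: `ξ` is measurable, the integral `∫ ξ(x) ⟨φ(x), g⟩ dμ(x)` exists for all
`g ∈ H`, and it defines a bounded conjugate-linear functional of `g`. -/
def MemV (μ : Measure X) (φ : X → H) (ξ : X → ℂ) : Prop :=
  Measurable ξ ∧ (∀ g : H, Integrable (fun x => ξ x * ⟪g, φ x⟫) μ) ∧
    ∃ c : ℝ, ∀ g : H, ‖∫ x, ξ x * ⟪g, φ x⟫ ∂μ‖ ≤ c * ‖g‖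

/-- The map `T_φ : 𝒱_φ(X,μ) → H`, determined weakly by
`⟨T_φ ξ, g⟩ = ∫ ξ(x) ⟨φ(x), g⟩ dμ(x)` for all `g ∈ H` (junk value `0` off `𝒱_φ`). -/
def Tmap (μ : Measure X) (φ : X → H) (ξ : X → ℂ) : H :=
  if h : MemV μ φ ξ then
    have key : ∀ g : H, Integrable (fun x => (starRingEnd ℂ) (ξ x) * ⟪φ x, g⟫) μ := by
      intro g
      have h2 : Integrable (fun x => (RCLike.conjLIE : ℂ ≃ₗᵢ[ℝ] ℂ) (ξ x * ⟪g, φ x⟫)) μ :=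
        ((RCLike.conjLIE : ℂ ≃ₗᵢ[ℝ] ℂ).integrable_comp_iff).2 (h.2.1 g)
      simpa [RCLike.conjLIE_apply, map_mul] using h2
    (InnerProductSpace.toDual ℂ H).symm
      (LinearMap.mkContinuousOfExistsBound
        { toFun := fun g => ∫ x, (starRingEnd ℂ) (ξ x) * ⟪φ x, g⟫ ∂μ
          map_add' := fun g g' => by
            simp only [inner_add_right, mul_add]
            exact integral_add (key g) (key g')
          map_smul' := fun c g => by
            simp only [inner_smul_right, RingHom.id_apply]
            calc ∫ x, (starRingEnd ℂ) (ξ x) * (c * ⟪φ x, g⟫) ∂μ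
                = ∫ x, c * ((starRingEnd ℂ) (ξ x) * ⟪φ x, g⟫) ∂μ := by
                  simp only [mul_left_comm]
              _ = c * ∫ x, (starRingEnd ℂ) (ξ x) * ⟪φ x, g⟫ ∂μ := by rw [integral_const_mul] }
        (by
          obtain ⟨c, hc⟩ := h.2.2
          refine ⟨c, fun g => ?_⟩
          have he : ∫ x, (starRingEnd ℂ) (ξ x) * ⟪φ x, g⟫ ∂μ
              = (starRingEnd ℂ) (∫ x, ξ x * ⟪g, φ x⟫ ∂μ) := by
            rw [← integral_conj]
            congr 1; funext x
            simp [map_mul]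
          simp only [LinearMap.coe_mk, AddHom.coe_mk]
          rw [he, RCLike.norm_conj]
          exact hc g))
  else 0

/-- The norm `‖[ξ]_φ‖_φ = sup_{‖g‖ ≤ 1} |∫ ξ(x) ⟨φ(x), g⟩ dμ(x)|` (computed on a
representative; it only depends on the class `[ξ]_φ = ξ + Ker T_φ`). -/
def Vnorm (μ : Measure X) (φ : X → H) (ξ : X → ℂ) : ℝ :=
  ⨆ g : {g : H // ‖g‖ ≤ 1}, ‖∫ x, ξ x * ⟪(g : H), φ x⟫ ∂μ‖

/-- The range of `T̂_φ : V_φ(X,μ) → H` (equivalently, of `T_φ` on `𝒱_φ(X,μ)`). -/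
def Tran (μ : Measure X) (φ : X → H) : Set H := Tmap μ φ '' {ξ | MemV μ φ ξ}

/-- The analysis coefficient map: `(C_ψ f)(x) = ⟨f, ψ(x)⟩`. -/
def Cpsi (ψ : X → H) (f : H) : X → ℂ := fun x => ⟪ψ x, f⟫

/-- `φ` is `μ`-total: `Ker C_φ = {0}`, i.e. if `∫ ξ(x) ⟨φ(x), f⟩ dμ(x) = 0` for every
`ξ ∈ 𝒱_φ(X,μ)`, then `f = 0`. -/
def MuTotal (μ : Measure X) (φ : X → H) : Prop :=
  ∀ f : H, (∀ ξ, MemV μ φ ξ → ∫ x, ξ x * ⟪f, φ x⟫ ∂μ = 0) → f = 0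

/-- `S : H ≃L[ℂ] H` represents the sesquilinear form `Ω_{ψ,φ}`:
`⟨S f, g⟩ = ∫ ⟨f, ψ(x)⟩ ⟨φ(x), g⟩ dμ(x)` for all `f, g ∈ H`. -/
def IsAnalysisOp (μ : Measure X) (ψ φ : X → H) (S : H ≃L[ℂ] H) : Prop :=
  ∀ f g : H, ⟪g, S f⟫ = ∫ x, ⟪ψ x, f⟫ * ⟪g, φ x⟫ ∂μ

/-- `(ψ, φ)` is a reproducing pair: both weakly measurable, the form
`Ω_{ψ,φ}(f,g) = ∫ ⟨f,ψ(x)⟩⟨φ(x),g⟩ dμ(x)` is well defined (integrable) and bounded, and the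
associated bounded operator `S_{ψ,φ}` has a bounded everywhere-defined inverse. -/
def IsReproducingPair (μ : Measure X) (ψ φ : X → H) : Prop :=
  WeaklyMeasurable ψ ∧ WeaklyMeasurable φ ∧
    (∀ f g : H, Integrable (fun x => ⟪ψ x, f⟫ * ⟪g, φ x⟫) μ) ∧
    ∃ S : H ≃L[ℂ] H, IsAnalysisOp μ ψ φ S

/-- Completeness of `V_φ(X,μ)` in the norm `‖·‖_φ`, phrased via representatives:
every `‖·‖_φ`-Cauchy sequence of elements of `𝒱_φ(X,μ)` converges in `‖·‖_φ`
to an element of `𝒱_φ(X,μ)`. -/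
def VComplete (μ : Measure X) (φ : X → H) : Prop :=
  ∀ ξ : ℕ → X → ℂ, (∀ n, MemV μ φ (ξ n)) →
    (∀ ε : ℝ, 0 < ε → ∃ N, ∀ m ≥ N, ∀ n ≥ N, Vnorm μ φ (ξ m - ξ n) < ε) →
    ∃ η, MemV μ φ η ∧ Tendsto (fun n => Vnorm μ φ (ξ n - η)) atTop (𝓝 0)

/-- `F` is (induced by) a bounded linear functional on `V_φ(X,μ)`: it is linear on `𝒱_φ(X,μ)`,
constant on the classes of `V_φ(X,μ) = 𝒱_φ(X,μ)/Ker T_φ`, and bounded for `‖·‖_φ`. -/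
def IsBddLinearFunctional (μ : Measure X) (φ : X → H) (F : (X → ℂ) → ℂ) : Prop :=
  (∀ ξ η, MemV μ φ ξ → MemV μ φ η → F (ξ + η) = F ξ + F η) ∧
  (∀ (c : ℂ) ξ, MemV μ φ ξ → F (c • ξ) = c * F ξ) ∧
  (∀ ξ η, MemV μ φ ξ → MemV μ φ η → Tmap μ φ (ξ - η) = 0 → F ξ = F η) ∧
  ∃ c : ℝ, ∀ ξ, MemV μ φ ξ → ‖F ξ‖ ≤ c * Vnorm μ φ ξ

/-- The dual norm `‖F‖_{φ*} = sup_{‖[ξ]_φ‖_φ ≤ 1} |F([ξ]_φ)|`. -/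
def DualNorm (μ : Measure X) (φ : X → H) (F : (X → ℂ) → ℂ) : ℝ :=
  ⨆ ξ : {ξ : X → ℂ // MemV μ φ ξ ∧ Vnorm μ φ ξ ≤ 1}, ‖F ξ.1‖

/-- `V_φ(X,μ)` and `V_ψ(X,μ)` are conjugate dual to each other with respect to the pairing
`⟨⟨ξ, η⟩⟩ = ∫ ξ(x) conj(η(x)) dμ(x)`: the pairing is well defined, each class `[η]_ψ` gives a
bounded linear functional on `V_φ(X,μ)`, and `[η]_ψ ↦ ⟨⟨·, η⟩⟩` is a bijection from `V_ψ(X,μ)`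
onto the dual of `V_φ(X,μ)`. -/
def ConjDual (μ : Measure X) (φ ψ : X → H) : Prop :=
  (∀ ξ η, MemV μ φ ξ → MemV μ ψ η →
      Integrable (fun x => ξ x * (starRingEnd ℂ) (η x)) μ) ∧
  (∀ η, MemV μ ψ η →
      IsBddLinearFunctional μ φ (fun ξ => ∫ x, ξ x * (starRingEnd ℂ) (η x) ∂μ)) ∧
  (∀ η η', MemV μ ψ η → MemV μ ψ η' →
      (∀ ξ, MemV μ φ ξ →
        ∫ x, ξ x * (starRingEnd ℂ) (η x) ∂μ = ∫ x, ξ x * (starRingEnd ℂ) (η' x) ∂μ) →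
      Tmap μ ψ (η - η') = 0) ∧
  (∀ F, IsBddLinearFunctional μ φ F →
      ∃ η, MemV μ ψ η ∧ ∀ ξ, MemV μ φ ξ → F ξ = ∫ x, ξ x * (starRingEnd ℂ) (η x) ∂μ)

/-!
Since `⟨T_φ ξ, g⟩ = ∫ ξ ⟨φ, g⟩ dμ` and `‖[ξ]_φ‖_φ = ‖T_φ ξ‖`, the map `T̂_φ` is an isometry of
`V_φ(X,μ)` onto the subspace `ran T̂_φ` of `H`. A bounded functional on `V_φ(X,μ)` is therefore a
bounded functional on `ran T̂_φ`; extending it to `H` and projecting its Riesz vector onto the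
closure of `ran T̂_φ` gives the representing vector `g`, unique in that closure because
`(ran T̂_φ)^⊥ = (closure ran T̂_φ)^⊥`. Cauchy–Schwarz gives `‖F‖_{φ*} ≤ ‖g‖`, and testing against
elements of `ran T̂_φ` close to `g` gives equality.
-/

section InnerProductSpace

variable {𝕜 E : Type*} [RCLike 𝕜] [NormedAddCommGroup E] [InnerProductSpace 𝕜 E]

/-- Extend `ℓ` by Hahn–Banach, represent the extension by Riesz, and project the representative
onto the closure of `M`. -/
theorem Submodule.exists_mem_topologicalClosure_inner_eq [CompleteSpace E] (M : Submodule 𝕜 E)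
    (ℓ : StrongDual 𝕜 M) :
    ∃ g ∈ M.topologicalClosure, ∀ h : M, ℓ h = inner 𝕜 g (h : E) := by
  obtain ⟨G, hG, -⟩ := exists_extension_norm_eq M ℓ
  set K := M.topologicalClosure
  refine ⟨K.starProjection ((InnerProductSpace.toDual 𝕜 E).symm G),
    K.starProjection_apply_mem _, fun h => ?_⟩
  rw [K.inner_starProjection_left_eq_right,
    K.starProjection_eq_self_iff.2 (M.le_topologicalClosure h.2),
    InnerProductSpace.toDual_symm_apply, hG]

theorem Submodule.eq_of_mem_topologicalClosure_of_inner_eq (M : Submodule 𝕜 E) {u v : E}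
    (hu : u ∈ M.topologicalClosure) (hv : v ∈ M.topologicalClosure)
    (huv : ∀ w ∈ M, inner 𝕜 u w = inner 𝕜 v w) : u = v := by
  have hK : u - v ∈ M.topologicalClosure := sub_mem hu hv
  have hKperp : u - v ∈ M.topologicalClosureᗮ := by
    rw [Submodule.orthogonal_closure, Submodule.mem_orthogonal']
    intro w hw
    rw [inner_sub_left, huv w hw, sub_self]
  rw [← sub_eq_zero, ← Submodule.mem_bot 𝕜, ← M.topologicalClosure.inf_orthogonal_eq_bot]
  exact ⟨hK, hKperp⟩

theorem iSup_norm_inner_unitClosedBall (v : E) :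
    (⨆ g : {g : E // ‖g‖ ≤ 1}, ‖inner 𝕜 (g : E) v‖) = ‖v‖ := by
  rw [← innerSL_apply_norm 𝕜 v, ← (innerSL 𝕜 v).sSup_unitClosedBall_eq_norm, sSup_image']
  exact (Equiv.subtypeEquivRight fun g => mem_closedBall_zero_iff.symm).iSup_congr
    fun g => norm_inner_symm _ _

end InnerProductSpace

section VSpace

variable {E : Type*} [NormedAddCommGroup E] [InnerProductSpace ℂ E]
  {α : Type*} [MeasurableSpace α] {μ : Measure α} {φ : α → E}

variable (μ φ) in
theorem memV_zero : MemV μ φ 0 :=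
  ⟨measurable_const, fun g => by simp, 0, fun g => by simp⟩

theorem MemV.add {ξ η : α → ℂ} (hξ : MemV μ φ ξ) (hη : MemV μ φ η) : MemV μ φ (ξ + η) := by
  obtain ⟨mξ, iξ, c, hc⟩ := hξ
  obtain ⟨mη, iη, d, hd⟩ := hη
  have hsum : ∀ g, ∫ x, (ξ + η) x * ⟪g, φ x⟫ ∂μ
      = (∫ x, ξ x * ⟪g, φ x⟫ ∂μ) + ∫ x, η x * ⟪g, φ x⟫ ∂μ := fun g => by
    simp only [Pi.add_apply, add_mul, integral_add (iξ g) (iη g)]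
  refine ⟨mξ.add mη, fun g => ?_, c + d, fun g => ?_⟩
  · exact ((iξ g).add (iη g)).congr (ae_of_all _ fun x => (add_mul _ _ _).symm)
  · rw [hsum, add_mul]
    exact (norm_add_le _ _).trans (add_le_add (hc g) (hd g))

theorem MemV.const_smul (a : ℂ) {ξ : α → ℂ} (hξ : MemV μ φ ξ) : MemV μ φ (a • ξ) := by
  obtain ⟨mξ, iξ, c, hc⟩ := hξ
  have hsmul : ∀ g, ∫ x, (a • ξ) x * ⟪g, φ x⟫ ∂μ = a * ∫ x, ξ x * ⟪g, φ x⟫ ∂μ := fun g => by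
    simp only [Pi.smul_apply, smul_eq_mul, mul_assoc, integral_const_mul]
  refine ⟨mξ.const_smul a, fun g => ?_, ‖a‖ * c, fun g => ?_⟩
  · simpa only [Pi.smul_apply, smul_eq_mul, mul_assoc] using (iξ g).const_mul a
  · rw [hsmul, norm_mul, mul_assoc]
    exact mul_le_mul_of_nonneg_left (hc g) (norm_nonneg a)

theorem Vnorm_nonneg (ξ : α → ℂ) : 0 ≤ Vnorm μ φ ξ :=
  Real.iSup_nonneg fun _ => norm_nonneg _

variable [CompleteSpace E]

theorem inner_Tmap {ξ : α → ℂ} (h : MemV μ φ ξ) (g : E) :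
    ⟪g, Tmap μ φ ξ⟫ = ∫ x, ξ x * ⟪g, φ x⟫ ∂μ := by
  rw [← inner_conj_symm, Tmap, dif_pos h, InnerProductSpace.toDual_symm_apply]
  simp only [LinearMap.mkContinuousOfExistsBound_apply, LinearMap.coe_mk, AddHom.coe_mk]
  rw [← integral_conj]
  simp only [map_mul, Complex.conj_conj, inner_conj_symm]

theorem Tmap_add {ξ η : α → ℂ} (hξ : MemV μ φ ξ) (hη : MemV μ φ η) :
    Tmap μ φ (ξ + η) = Tmap μ φ ξ + Tmap μ φ η := by
  refine ext_inner_left ℂ fun g => ?_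
  rw [inner_add_right, inner_Tmap (hξ.add hη), inner_Tmap hξ, inner_Tmap hη,
    ← integral_add (hξ.2.1 g) (hη.2.1 g)]
  simp only [Pi.add_apply, add_mul]

theorem Tmap_const_smul (a : ℂ) {ξ : α → ℂ} (hξ : MemV μ φ ξ) :
    Tmap μ φ (a • ξ) = a • Tmap μ φ ξ := by
  refine ext_inner_left ℂ fun g => ?_
  rw [inner_smul_right, inner_Tmap (hξ.const_smul a), inner_Tmap hξ, ← integral_const_mul]
  simp only [Pi.smul_apply, smul_eq_mul, mul_assoc]

variable (μ φ) in
/-- The space `𝒱_φ(X,μ)`. -/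
def memVSubmodule : Submodule ℂ (α → ℂ) where
  carrier := {ξ | MemV μ φ ξ}
  zero_mem' := memV_zero μ φ
  add_mem' := MemV.add
  smul_mem' a _ := MemV.const_smul a

variable (μ φ) in
def TmapLinear : memVSubmodule μ φ →ₗ[ℂ] E where
  toFun ξ := Tmap μ φ ξ
  map_add' ξ η := Tmap_add ξ.2 η.2
  map_smul' a ξ := Tmap_const_smul a ξ.2

@[simp]
theorem TmapLinear_apply (ξ : memVSubmodule μ φ) : TmapLinear μ φ ξ = Tmap μ φ ξ :=
  rfl

theorem Tmap_sub {ξ η : α → ℂ} (hξ : MemV μ φ ξ) (hη : MemV μ φ η) :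
    Tmap μ φ (ξ - η) = Tmap μ φ ξ - Tmap μ φ η :=
  map_sub (TmapLinear μ φ) ⟨ξ, hξ⟩ ⟨η, hη⟩

variable (μ φ) in
theorem coe_range_TmapLinear : (LinearMap.range (TmapLinear μ φ) : Set E) = Tran μ φ := by
  ext h
  exact ⟨fun ⟨ξ, hξ⟩ => ⟨ξ, ξ.2, hξ⟩, fun ⟨ξ, hξ, hξh⟩ => ⟨⟨ξ, hξ⟩, hξh⟩⟩

variable (μ φ) in
theorem closure_Tran :
    closure (Tran μ φ) = ((LinearMap.range (TmapLinear μ φ)).topologicalClosure : Set E) := by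
  rw [Submodule.topologicalClosure_coe, coe_range_TmapLinear]

theorem Vnorm_eq {ξ : α → ℂ} (h : MemV μ φ ξ) : Vnorm μ φ ξ = ‖Tmap μ φ ξ‖ := by
  simp only [Vnorm, ← inner_Tmap h, iSup_norm_inner_unitClosedBall]

theorem Vnorm_const_smul (a : ℂ) {ξ : α → ℂ} (h : MemV μ φ ξ) :
    Vnorm μ φ (a • ξ) = ‖a‖ * Vnorm μ φ ξ := by
  rw [Vnorm_eq (h.const_smul a), Vnorm_eq h, Tmap_const_smul a h, norm_smul]

end VSpace

namespace IsBddLinearFunctional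

variable {E : Type*} [NormedAddCommGroup E] [InnerProductSpace ℂ E] [CompleteSpace E]
  {α : Type*} [MeasurableSpace α] {μ : Measure α} {φ : α → E} {F : (α → ℂ) → ℂ}

def toLinearMap (hF : IsBddLinearFunctional μ φ F) : memVSubmodule μ φ →ₗ[ℂ] ℂ where
  toFun ξ := F ξ
  map_add' ξ η := hF.1 ξ η ξ.2 η.2
  map_smul' a ξ := hF.2.1 a ξ ξ.2

@[simp]
theorem toLinearMap_apply (hF : IsBddLinearFunctional μ φ F) (ξ : memVSubmodule μ φ) :
    hF.toLinearMap ξ = F ξ :=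
  rfl

theorem ker_TmapLinear_le (hF : IsBddLinearFunctional μ φ F) :
    LinearMap.ker (TmapLinear μ φ) ≤ LinearMap.ker hF.toLinearMap := by
  intro ξ hξ
  have h0 : F ξ = F 0 := hF.2.2.1 ξ 0 ξ.2 (memV_zero μ φ) (by simpa using hξ)
  simpa [LinearMap.mem_ker, h0] using hF.toLinearMap.map_zero

/-- `F` only depends on `T_φ ξ`, so it descends to the range of `T̂_φ`. -/
def onRangeLinear (hF : IsBddLinearFunctional μ φ F) :
    LinearMap.range (TmapLinear μ φ) →ₗ[ℂ] ℂ :=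
  (LinearMap.ker (TmapLinear μ φ)).liftQ hF.toLinearMap hF.ker_TmapLinear_le ∘ₗ
    (TmapLinear μ φ).quotKerEquivRange.symm.toLinearMap

theorem onRangeLinear_apply (hF : IsBddLinearFunctional μ φ F) (ξ : memVSubmodule μ φ) :
    hF.onRangeLinear ⟨TmapLinear μ φ ξ, LinearMap.mem_range_self _ ξ⟩ = F ξ := by
  rw [onRangeLinear, LinearMap.comp_apply, LinearEquiv.coe_coe,
    LinearMap.quotKerEquivRange_symm_apply_image]
  rfl

def onRange (hF : IsBddLinearFunctional μ φ F) :
    StrongDual ℂ (LinearMap.range (TmapLinear μ φ)) :=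
  hF.onRangeLinear.mkContinuousOfExistsBound <| by
    obtain ⟨c, hc⟩ := hF.2.2.2
    refine ⟨c, ?_⟩
    rintro ⟨_, ξ, rfl⟩
    rw [onRangeLinear_apply]
    exact (hc ξ ξ.2).trans_eq (by rw [Vnorm_eq ξ.2]; rfl)

theorem onRange_apply (hF : IsBddLinearFunctional μ φ F) {ξ : α → ℂ} (hξ : MemV μ φ ξ) :
    hF.onRange ⟨Tmap μ φ ξ, ⟨ξ, hξ⟩, rfl⟩ = F ξ :=
  hF.onRangeLinear_apply ⟨ξ, hξ⟩

end IsBddLinearFunctional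

section Duality

variable {E : Type*} [NormedAddCommGroup E] [InnerProductSpace ℂ E] [CompleteSpace E]
  {α : Type*} [MeasurableSpace α] {μ : Measure α} {φ : α → E} {F : (α → ℂ) → ℂ}

theorem isBddLinearFunctional_integral_inner (g : E) :
    IsBddLinearFunctional μ φ (fun ξ => ∫ x, ξ x * ⟪g, φ x⟫ ∂μ) := by
  refine ⟨fun ξ η hξ hη => ?_, fun a ξ hξ => ?_, fun ξ η hξ hη hT => ?_, ‖g‖, fun ξ hξ => ?_⟩
  · simp only [Pi.add_apply, add_mul, integral_add (hξ.2.1 g) (hη.2.1 g)]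
  · simp only [Pi.smul_apply, smul_eq_mul, mul_assoc, integral_const_mul]
  · rw [Tmap_sub hξ hη, sub_eq_zero] at hT
    simp only [← inner_Tmap hξ, ← inner_Tmap hη, hT]
  · dsimp only
    rw [← inner_Tmap hξ, Vnorm_eq hξ]
    exact norm_inner_le_norm g _

theorem IsBddLinearFunctional.bddAbove_dualNorm (hF : IsBddLinearFunctional μ φ F) :
    BddAbove (Set.range fun ξ : {ξ : α → ℂ // MemV μ φ ξ ∧ Vnorm μ φ ξ ≤ 1} => ‖F ξ.1‖) := by
  obtain ⟨c, hc⟩ := hF.2.2.2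
  refine ⟨|c|, ?_⟩
  rintro _ ⟨⟨ξ, hξ, hξ1⟩, rfl⟩
  calc ‖F ξ‖ ≤ c * Vnorm μ φ ξ := hc ξ hξ
    _ ≤ |c| * Vnorm μ φ ξ := mul_le_mul_of_nonneg_right (le_abs_self c) (Vnorm_nonneg ξ)
    _ ≤ |c| := mul_le_of_le_one_right (abs_nonneg c) hξ1

theorem IsBddLinearFunctional.norm_le_dualNorm_mul (hF : IsBddLinearFunctional μ φ F)
    {ξ : α → ℂ} (hξ : MemV μ φ ξ) : ‖F ξ‖ ≤ DualNorm μ φ F * Vnorm μ φ ξ := by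
  obtain ⟨c, hc⟩ := hF.2.2.2
  rcases (Vnorm_nonneg (μ := μ) (φ := φ) ξ).eq_or_lt with h0 | hpos
  · simpa [← h0] using hc ξ hξ
  set t := Vnorm μ φ ξ
  have hmem : MemV μ φ (((t⁻¹ : ℝ) : ℂ) • ξ) := hξ.const_smul _
  have hunit : Vnorm μ φ (((t⁻¹ : ℝ) : ℂ) • ξ) ≤ 1 := by
    rw [Vnorm_const_smul _ hξ, Complex.norm_real, Real.norm_of_nonneg (inv_nonneg.2 hpos.le),
      inv_mul_cancel₀ hpos.ne']
  have hle : ‖F (((t⁻¹ : ℝ) : ℂ) • ξ)‖ ≤ DualNorm μ φ F :=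
    le_ciSup hF.bddAbove_dualNorm ⟨_, hmem, hunit⟩
  rw [hF.2.1 _ ξ hξ, norm_mul, Complex.norm_real, Real.norm_of_nonneg (inv_nonneg.2 hpos.le),
    inv_mul_le_iff₀ hpos] at hle
  linarith

theorem dualNorm_le_of_eq_integral_inner {g : E}
    (hrep : ∀ ξ, MemV μ φ ξ → F ξ = ∫ x, ξ x * ⟪g, φ x⟫ ∂μ) : DualNorm μ φ F ≤ ‖g‖ := by
  have : Nonempty {ξ : α → ℂ // MemV μ φ ξ ∧ Vnorm μ φ ξ ≤ 1} :=
    ⟨⟨0, memV_zero μ φ, by simp [Vnorm]⟩⟩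
  refine ciSup_le fun ⟨ξ, hξ, hξ1⟩ => ?_
  rw [hrep ξ hξ, ← inner_Tmap hξ]
  calc ‖⟪g, Tmap μ φ ξ⟫‖ ≤ ‖g‖ * ‖Tmap μ φ ξ‖ := norm_inner_le_norm _ _
    _ ≤ ‖g‖ := mul_le_of_le_one_right (norm_nonneg g) (Vnorm_eq hξ ▸ hξ1)

/-- Testing against `h = g` gives the reverse inequality; the estimate
`‖⟨g, h⟩‖ ≤ ‖F‖_{φ*} ‖h‖` reaches `g` from `ran T̂_φ` because it is a closed condition on `h`. -/
theorem IsBddLinearFunctional.norm_le_dualNorm (hF : IsBddLinearFunctional μ φ F) {g : E}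
    (hg : g ∈ closure (Tran μ φ))
    (hrep : ∀ ξ, MemV μ φ ξ → F ξ = ∫ x, ξ x * ⟪g, φ x⟫ ∂μ) : ‖g‖ ≤ DualNorm μ φ F := by
  set D := DualNorm μ φ F
  have hclosed : IsClosed {h : E | ‖⟪g, h⟫‖ ≤ D * ‖h‖} := isClosed_le (by fun_prop) (by fun_prop)
  have hran : Tran μ φ ⊆ {h : E | ‖⟪g, h⟫‖ ≤ D * ‖h‖} := by
    rintro _ ⟨ξ, hξ, rfl⟩
    have := hF.norm_le_dualNorm_mul hξ
    rwa [hrep ξ hξ, ← inner_Tmap hξ, Vnorm_eq hξ] at this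
  have hgg : ‖⟪g, g⟫‖ ≤ D * ‖g‖ := hclosed.closure_subset_iff.2 hran hg
  rw [inner_self_eq_norm_sq_to_K, norm_pow, RCLike.norm_ofReal, abs_norm] at hgg
  have hD : 0 ≤ D := Real.iSup_nonneg fun _ => norm_nonneg _
  nlinarith [norm_nonneg g]

theorem IsBddLinearFunctional.exists_eq_integral_inner (hF : IsBddLinearFunctional μ φ F) :
    ∃ g ∈ closure (Tran μ φ), ∀ ξ, MemV μ φ ξ → F ξ = ∫ x, ξ x * ⟪g, φ x⟫ ∂μ := by
  obtain ⟨g, hg, hℓ⟩ := (LinearMap.range (TmapLinear μ φ)).exists_mem_topologicalClosure_inner_eq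
    hF.onRange
  refine ⟨g, ?_, fun ξ hξ => ?_⟩
  · rwa [closure_Tran, SetLike.mem_coe]
  · rw [← hF.onRange_apply hξ, hℓ, inner_Tmap hξ]

theorem eq_of_integral_inner_eq {g g' : E} (hg : g ∈ closure (Tran μ φ))
    (hg' : g' ∈ closure (Tran μ φ))
    (h : ∀ ξ, MemV μ φ ξ → ∫ x, ξ x * ⟪g, φ x⟫ ∂μ = ∫ x, ξ x * ⟪g', φ x⟫ ∂μ) : g = g' := by
  rw [closure_Tran, SetLike.mem_coe] at hg hg'
  refine (LinearMap.range (TmapLinear μ φ)).eq_of_mem_topologicalClosure_of_inner_eq hg hg' ?_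
  rintro _ ⟨ξ, rfl⟩
  simpa only [TmapLinear_apply, inner_Tmap ξ.2] using h ξ ξ.2

end Duality

theorem statement5_general (μ : Measure X) (φ : X → H)
    (F : (X → ℂ) → ℂ) (hF : IsBddLinearFunctional μ φ F) :
    (∃ g : H, g ∈ closure (Tran μ φ) ∧
        (∀ ξ, MemV μ φ ξ → F ξ = ∫ x, ξ x * ⟪g, φ x⟫ ∂μ) ∧
        DualNorm μ φ F = ‖g‖ ∧
        ∀ g' : H, g' ∈ closure (Tran μ φ) →
          (∀ ξ, MemV μ φ ξ → F ξ = ∫ x, ξ x * ⟪g', φ x⟫ ∂μ) → g' = g) ∧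
    (∀ g : H, IsBddLinearFunctional μ φ (fun ξ => ∫ x, ξ x * ⟪g, φ x⟫ ∂μ) ∧
        DualNorm μ φ (fun ξ => ∫ x, ξ x * ⟪g, φ x⟫ ∂μ) ≤ ‖g‖ ∧
        (g ∈ Tran μ φ → DualNorm μ φ (fun ξ => ∫ x, ξ x * ⟪g, φ x⟫ ∂μ) = ‖g‖)) := by
  refine ⟨?_, fun g => ?_⟩
  · obtain ⟨g, hg, hrep⟩ := hF.exists_eq_integral_inner
    refine ⟨g, hg, hrep, (dualNorm_le_of_eq_integral_inner hrep).antisymm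
      (hF.norm_le_dualNorm hg hrep), fun g' hg' hrep' => ?_⟩
    exact eq_of_integral_inner_eq hg' hg fun ξ hξ => (hrep' ξ hξ).symm.trans (hrep ξ hξ)
  · have hg : IsBddLinearFunctional μ φ (fun ξ => ∫ x, ξ x * ⟪g, φ x⟫ ∂μ) :=
      isBddLinearFunctional_integral_inner g
    have hle := dualNorm_le_of_eq_integral_inner (F := fun ξ => ∫ x, ξ x * ⟪g, φ x⟫ ∂μ)
      fun _ _ => rfl
    exact ⟨hg, hle, fun hran => hle.antisymm
      (hg.norm_le_dualNorm (subset_closure hran) fun _ _ => rfl)⟩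

/-- Let `φ` be weakly measurable. Every continuous linear functional `F` on
`V_φ(X,μ)` is represented by a unique `g` in the closure of the range of `T̂_φ` via
`F([ξ]_φ) = ∫ ξ(x) ⟨φ(x),g⟩ dμ(x)`, with `‖F‖_{φ*} = ‖g‖`. Conversely every `g ∈ H` defines a
bounded linear functional `F` this way with `‖F‖_{φ*} ≤ ‖g‖`, with equality when `g` is in the
range of `T̂_φ`. -/
theorem statement5 (μ : Measure X) [μ.Regular] (φ : X → H) (hφ : WeaklyMeasurable φ)
    (F : (X → ℂ) → ℂ) (hF : IsBddLinearFunctional μ φ F) :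
    (∃ g : H, g ∈ closure (Tran μ φ) ∧
        (∀ ξ, MemV μ φ ξ → F ξ = ∫ x, ξ x * ⟪g, φ x⟫ ∂μ) ∧
        DualNorm μ φ F = ‖g‖ ∧
        ∀ g' : H, g' ∈ closure (Tran μ φ) →
          (∀ ξ, MemV μ φ ξ → F ξ = ∫ x, ξ x * ⟪g', φ x⟫ ∂μ) → g' = g) ∧
    (∀ g : H, IsBddLinearFunctional μ φ (fun ξ => ∫ x, ξ x * ⟪g, φ x⟫ ∂μ) ∧
        DualNorm μ φ (fun ξ => ∫ x, ξ x * ⟪g, φ x⟫ ∂μ) ≤ ‖g‖ ∧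
        (g ∈ Tran μ φ → DualNorm μ φ (fun ξ => ∫ x, ξ x * ⟪g, φ x⟫ ∂μ) = ‖g‖)) :=
  statement5_general μ φ F hF
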